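/- Let N = 2K-1 and let Π be the N×N cyclic permutation matrix with Π_{i,j} = 1 exactly when (i,j) ∈ {(1,2),(2,3),...,(N-1,N),(N,1)}. For an N×K matrix B, let G = [B, Π B] (N×2K) and let G̃ be the N×N matrix obtained by dropping the last column of G. Then there exists an assignment of the entries of B making det(G̃) ≠ 0; consequently, if the entries of B are i.i.d. from a continuous distribution, det(G̃) ≠ 0 with probability 1. -/

import Mathlib

/-!
`det G̃` is a polynomial in the entries of `B`. Taking `B` with row `0` equal to `e_{K-1}`,
row `2c + 2` equal to `e_c` and all odd rows zero makes every column of `G̃` a distinct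
standard basis vector, so `G̃` is a permutation matrix and this polynomial is nonzero.
The zero set of a nonzero real polynomial is null for any product of atomless measures
(Fubini, one variable at a time: a nonzero one-variable polynomial has finitely many roots),
and i.i.d. entries with an absolutely continuous law have exactly such a product law.
-/

open MeasureTheory ProbabilityTheory Matrix

/-- The `(2K-1) × (2K-1)` matrix `G̃` obtained from `G = [B, Π B]` (with `Π` the cyclic
permutation sending row `i` to row `i+1`) by dropping the last column. Its `(i,j)` entry is
`B i j` for `j < K` and `B (i+1) (j-K)` otherwise. -/
noncomputable def Gtilde {K : ℕ} (hK : 1 ≤ K) (B : Matrix (Fin (2 * K - 1)) (Fin K) ℝ) :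
    Matrix (Fin (2 * K - 1)) (Fin (2 * K - 1)) ℝ :=
  Matrix.of fun i j =>
    if h : (j : ℕ) < K then B i ⟨j, h⟩
    else B (finRotate (2 * K - 1) i) ⟨(j : ℕ) - K, by have := j.isLt; omega⟩

theorem val_finRotate {n : ℕ} (i : Fin n) :
    (finRotate n i : ℕ) = if (i : ℕ) + 1 = n then 0 else (i : ℕ) + 1 := by
  obtain ⟨m, rfl⟩ : ∃ m, n = m + 1 := ⟨n - 1, by have := i.pos; omega⟩
  rw [coe_finRotate]
  simp [Fin.ext_iff]

theorem Matrix.det_of_ite_perm_ne_zero {n : Type*} [Fintype n] [DecidableEq n]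
    (σ : Equiv.Perm n) :
    (of fun i j => if i = σ j then (1 : ℝ) else 0).det ≠ 0 := by
  have : (of fun i j => if i = σ j then (1 : ℝ) else 0) = (σ.permMatrix ℝ)ᵀ := by
    ext i j
    simp [Equiv.Perm.permMatrix, PEquiv.toMatrix_apply, eq_comm]
  rw [this, det_transpose, det_permutation]
  exact Int.cast_ne_zero.2 (Units.ne_zero _)

theorem Matrix.det_of_eq_eval_det_X {n ι R : Type*} [Fintype n] [DecidableEq n] [CommRing R]
    (e : n → n → ι) (x : ι → R) :
    (of fun i j => x (e i j)).det =
      MvPolynomial.eval x (of fun i j => MvPolynomial.X (e i j)).det := by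
  rw [RingHom.map_det]
  congr 1
  ext i j
  simp

namespace MvPolynomial

variable {ι κ : Type*}

theorem ae_eval_ne_zero_of_isEmpty [IsEmpty ι] [Fintype ι] (μ : Measure ℝ)
    {p : MvPolynomial ι ℝ} (hp : p ≠ 0) :
    ∀ᵐ x ∂Measure.pi (fun _ : ι => μ), eval x p ≠ 0 := by
  rw [p.eq_C_of_isEmpty, Ne, C_eq_zero] at hp
  exact ae_of_all _ fun x => by rwa [p.eq_C_of_isEmpty, eval_C]

theorem ae_eval_ne_zero_of_equiv [Fintype ι] [Fintype κ] (μ : Measure ℝ) [SigmaFinite μ]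
    (e : ι ≃ κ)
    (h : ∀ p : MvPolynomial ι ℝ, p ≠ 0 →
      ∀ᵐ x ∂Measure.pi (fun _ : ι => μ), eval x p ≠ 0)
    {p : MvPolynomial κ ℝ} (hp : p ≠ 0) :
    ∀ᵐ x ∂Measure.pi (fun _ : κ => μ), eval x p ≠ 0 := by
  have hmp := measurePreserving_piCongrLeft (fun _ : κ => μ) e
  rw [← hmp.map_eq, (MeasurableEquiv.piCongrLeft _ e).measurableEmbedding.ae_map_iff]
  have hp' : rename e.symm p ≠ 0 :=
    (rename_injective _ e.symm.injective).ne_iff' (map_zero _) |>.2 hp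
  filter_upwards [h _ hp'] with x hx
  have hshift : MeasurableEquiv.piCongrLeft (fun _ => ℝ) e x = x ∘ e.symm := by
    funext k
    obtain ⟨i, rfl⟩ := e.surjective k
    simp [MeasurableEquiv.piCongrLeft_apply_apply]
  rwa [hshift, ← eval_rename]

theorem ae_eval_ne_zero_option [Fintype ι] (μ : Measure ℝ) [SigmaFinite μ]
    [NullSingletonClass μ]
    (h : ∀ p : MvPolynomial ι ℝ, p ≠ 0 →
      ∀ᵐ x ∂Measure.pi (fun _ : ι => μ), eval x p ≠ 0)
    {p : MvPolynomial (Option ι) ℝ} (hp : p ≠ 0) :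
    ∀ᵐ x ∂Measure.pi (fun _ : Option ι => μ), eval x p ≠ 0 := by
  set q := optionEquivLeft ℝ ι p
  have hq : q ≠ 0 := by simpa [q] using hp
  rw [← Measure.pi_map_piOptionEquivProd,
    (MeasurableEquiv.piOptionEquivProd _).symm.measurableEmbedding.ae_map_iff,
    Measure.ae_prod_iff_ae_ae]
  · filter_upwards [h _ (Polynomial.leadingCoeff_ne_zero.2 hq)] with s hs
    have hqs : q.map (eval s) ≠ 0 := by
      intro h0
      exact hs (by simpa using congrArg (Polynomial.coeff · q.natDegree) h0)
    filter_upwards [(Polynomial.finite_setOfPred_isRoot hqs).countable.ae_notMem μ] with y hy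
    have hsy : (MeasurableEquiv.piOptionEquivProd fun _ => ℝ).symm (s, y) =
        fun i => Option.elim i y s := by
      funext i; cases i <;> rfl
    rw [hsy, optionEquivLeft_elim_eval]
    simpa using hy
  · exact (measurableSet_singleton 0).compl.preimage
      ((continuous_eval p).measurable.comp (MeasurableEquiv.measurable _))

theorem ae_eval_ne_zero [Fintype ι] (μ : Measure ℝ) [SigmaFinite μ] [NullSingletonClass μ]
    {p : MvPolynomial ι ℝ} (hp : p ≠ 0) :
    ∀ᵐ x ∂Measure.pi (fun _ : ι => μ), eval x p ≠ 0 := by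
  refine Fintype.induction_empty_option (P := fun ι _ => ∀ p : MvPolynomial ι ℝ, p ≠ 0 →
    ∀ᵐ x ∂Measure.pi (fun _ : ι => μ), eval x p ≠ 0) ?_ ?_ ?_ ι p hp
  · exact fun α β _ e h _ => letI := Fintype.ofEquiv β e.symm; ae_eval_ne_zero_of_equiv μ e h
  · exact fun _ => ae_eval_ne_zero_of_isEmpty μ
  · exact fun α _ h _ => ae_eval_ne_zero_option μ h

end MvPolynomial

theorem ProbabilityTheory.iIndepFun.ae_eval_ne_zero {ι Ω : Type*} [Fintype ι]
    [MeasurableSpace Ω] {P : Measure Ω} {f : ι → Ω → ℝ} (hf : ∀ i, AEMeasurable (f i) P)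
    (hind : iIndepFun f P) {μ : Measure ℝ} [SigmaFinite μ] [NullSingletonClass μ]
    (hlaw : ∀ i, P.map (f i) = μ)
    {p : MvPolynomial ι ℝ} (hp : p ≠ 0) :
    ∀ᵐ ω ∂P, MvPolynomial.eval (fun i => f i ω) p ≠ 0 := by
  have hjoint := hind.map_fun_eq_pi_map hf
  simp only [hlaw] at hjoint
  refine ae_of_ae_map (p := fun x => MvPolynomial.eval x p ≠ 0) (aemeasurable_pi_lambda _ hf) ?_
  rw [hjoint]
  exact MvPolynomial.ae_eval_ne_zero μ hp

namespace Gtilde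

def entryIndex {K : ℕ} (i j : Fin (2 * K - 1)) : Fin (2 * K - 1) × Fin K :=
  if h : (j : ℕ) < K then (i, ⟨j, h⟩)
  else (finRotate (2 * K - 1) i, ⟨(j : ℕ) - K, by have := j.isLt; omega⟩)

theorem eq_of_entryIndex {K : ℕ} (hK : 1 ≤ K) (B : Matrix (Fin (2 * K - 1)) (Fin K) ℝ) :
    Gtilde hK B = of fun i j => B (entryIndex i j).1 (entryIndex i j).2 := by
  ext i j
  simp only [Gtilde, entryIndex, of_apply]
  split_ifs <;> rfl

/-- The row of the single `1` in column `j` of `G̃ (witness K)`. -/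
def pivot (K j : ℕ) : ℕ :=
  if j + 1 < K then 2 * j + 2 else if j + 1 = K then 0 else 2 * (j - K) + 1

noncomputable def pivotPerm (K : ℕ) : Equiv.Perm (Fin (2 * K - 1)) :=
  Equiv.ofBijective (fun j => ⟨pivot K j, by have := j.isLt; unfold pivot; split_ifs <;> omega⟩)
    (Finite.injective_iff_bijective.1 fun a b hab => by
      have := a.isLt; have := b.isLt
      simp only [Fin.mk.injEq, pivot] at hab
      ext; split_ifs at hab <;> omega)

noncomputable def witness (K : ℕ) : Matrix (Fin (2 * K - 1)) (Fin K) ℝ :=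
  of fun r c => if (r : ℕ) = pivot K c then 1 else 0

theorem witness_eq {K : ℕ} (hK : 1 ≤ K) :
    Gtilde hK (witness K) = of fun i j => if i = pivotPerm K j then 1 else 0 := by
  ext i j
  have := i.isLt; have := j.isLt
  simp only [Gtilde, witness, pivotPerm, pivot, of_apply, Fin.ext_iff, Equiv.ofBijective_apply,
    val_finRotate]
  split_ifs <;> first | rfl | omega | contradiction

noncomputable def detPoly (K : ℕ) : MvPolynomial (Fin (2 * K - 1) × Fin K) ℝ :=
  (of fun i j => MvPolynomial.X (entryIndex i j)).det

theorem det_eq_eval_detPoly {K : ℕ} (hK : 1 ≤ K) (B : Matrix (Fin (2 * K - 1)) (Fin K) ℝ) :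
    (Gtilde hK B).det = MvPolynomial.eval (fun q => B q.1 q.2) (detPoly K) := by
  rw [eq_of_entryIndex]
  exact det_of_eq_eval_det_X entryIndex fun q => B q.1 q.2

theorem det_witness_ne_zero {K : ℕ} (hK : 1 ≤ K) : (Gtilde hK (witness K)).det ≠ 0 := by
  rw [witness_eq]
  exact det_of_ite_perm_ne_zero _

end Gtilde

/-- For `N = 2K - 1` and the cyclic permutation `Π`, there is an assignment of the entries
of `B` making `det G̃ ≠ 0`, where `G̃` is `[B, Π B]` with the last column dropped;
consequently, if the entries of `B` are i.i.d. from a continuous distribution, then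
`det G̃ ≠ 0` with probability 1. -/
theorem stmt18 {K : ℕ} (hK : 1 ≤ K) :
    (∃ B : Matrix (Fin (2 * K - 1)) (Fin K) ℝ, (Gtilde hK B).det ≠ 0) ∧
    (∀ (Ω : Type) (_ : MeasurableSpace Ω) (P : Measure Ω), IsProbabilityMeasure P →
      ∀ B : Ω → Matrix (Fin (2 * K - 1)) (Fin K) ℝ,
      (∀ i j, Measurable fun ω => B ω i j) →
      iIndepFun
        (fun (q : Fin (2 * K - 1) × Fin K) ω => B ω q.1 q.2) P →
      ∀ μ : Measure ℝ, IsProbabilityMeasure μ → μ ≪ volume →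
      (∀ i j, P.map (fun ω => B ω i j) = μ) →
      ∀ᵐ ω ∂P, (Gtilde hK (B ω)).det ≠ 0) := by
  refine ⟨⟨Gtilde.witness K, Gtilde.det_witness_ne_zero hK⟩, ?_⟩
  intro Ω _ P _ B hB hind μ _ hμ hlaw
  have : NullSingletonClass μ := ⟨fun x => hμ (measure_singleton x)⟩
  have hp : Gtilde.detPoly K ≠ 0 := fun h =>
    Gtilde.det_witness_ne_zero hK (by rw [Gtilde.det_eq_eval_detPoly, h, map_zero])
  filter_upwards [hind.ae_eval_ne_zero (fun q => (hB q.1 q.2).aemeasurable)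
    (fun q => hlaw q.1 q.2) hp] with ω hω
  rwa [Gtilde.det_eq_eval_detPoly]
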